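/- (Tensor Reshape Theorem I, deterministic form.) Let Y_t ∈ ℝ^{d₁×⋯×d_K} for t = 1,…,T, and let 𝒜 = {a₁<⋯<a_ℓ} ⊆ {1,…,K} with complement {c₁<⋯<c_{K−ℓ}}. The following are equivalent: (i) there exist ranks r_k ≤ d_k, matrices A_k ∈ ℝ^{d_k×r_k} of full column rank, and tensors F_t ∈ ℝ^{r₁×⋯×r_K}, E_t ∈ ℝ^{d₁×⋯×d_K} with Y_t = F_t ×₁ A₁ ×₂ ⋯ ×_K A_K + E_t for all t; (ii) there exist ranks r_k ≤ d_k, full-column-rank matrices B_j ∈ ℝ^{d_{c_j}×r_{c_j}} for j = 1,…,K−ℓ, full-column-rank matrices A_{a_s} ∈ ℝ^{d_{a_s}×r_{a_s}} for s = 1,…,ℓ, and tensors G_t, N_t with Reshape(Y_t, 𝒜) = G_t ×₁ B₁ ×₂ ⋯ ×_{K−ℓ} B_{K−ℓ} ×_{K−ℓ+1} (A_{a_ℓ} ⊗ ⋯ ⊗ A_{a₁}) + N_t for all t. Moreover, (i) implies (ii) with the explicit correspondence G_t = Reshape(F_t, 𝒜), N_t = Reshape(E_t, 𝒜), and B_j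 = A_{c_j} for j = 1,…,K−ℓ. -/
import Mathlib


open Matrix

/-!
STATEMENT 4 (Tensor Reshape Theorem I, deterministic form).

An order-`K` tensor of dimensions `I : Fin K → ℕ` is a function
`((k : Fin K) → Fin (I k)) → ℝ`.  `Reshape(X, 𝒜)` is represented as a function of
the complement multi-index (the un-merged modes, in ascending order) and the merged
last-mode index; the merged tuple `(a : {a // a ∈ 𝒜}) → Fin (I a)` corresponds to
the flat index `1 + Σ_s (i_{a_s} − 1) ∏_{u<s} I_{a_u}`.  Under this correspondence,
the Kronecker product in descending order `A_{a_ℓ} ⊗ ⋯ ⊗ A_{a₁}` is `kronPi` over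
`{a // a ∈ 𝒜}`, and the multi-mode product by `B₁,…,B_{K−ℓ}` on the un-merged modes
is given by `kronPi` over `{j // j ∉ 𝒜}`.  Full column rank of `A` is `A.rank = (number
of columns)`.
-/

/-- An order-`K` tensor with mode dimensions `I`. -/
abbrev Tensor {K : ℕ} (I : Fin K → ℕ) : Type := ((k : Fin K) → Fin (I k)) → ℝ

/-- Iterated Kronecker product of a family of matrices (in descending index order),
under the identification of the flattened row/column indices with tuples. -/
def kronPi {ι : Type*} [Fintype ι] {m n : ι → ℕ}
    (A : (k : ι) → Matrix (Fin (m k)) (Fin (n k)) ℝ) :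
    Matrix ((k : ι) → Fin (m k)) ((k : ι) → Fin (n k)) ℝ :=
  Matrix.of fun i j => ∏ k, A k (i k) (j k)

/-- The multi-mode product `F ×₁ A₁ ×₂ ⋯ ×_K A_K`, written entrywise. -/
def multiMode {K : ℕ} {d r : Fin K → ℕ}
    (A : (k : Fin K) → Matrix (Fin (d k)) (Fin (r k)) ℝ) (F : Tensor r) : Tensor d :=
  fun i => ∑ x : (k : Fin K) → Fin (r k), (∏ k, A k (i k) (x k)) * F x

/-- The reshape of a tensor along the mode set `𝒜`. -/
def Reshape {K : ℕ} {I : Fin K → ℕ} (X : Tensor I) (𝒜 : Finset (Fin K)) :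
    ((j : {j : Fin K // j ∉ 𝒜}) → Fin (I j.1)) →
      ((a : {a : Fin K // a ∈ 𝒜}) → Fin (I a.1)) → ℝ :=
  fun c m => X fun k => if h : k ∈ 𝒜 then m ⟨k, h⟩ else c ⟨k, h⟩

/-- Statement (i): `Y_t = F_t ×₁ A₁ ⋯ ×_K A_K + E_t` with full-column-rank loadings. -/
def FollowsTFM {K T : ℕ} (d : Fin K → ℕ) (Y : Fin T → Tensor d) : Prop :=
  ∃ r : Fin K → ℕ, (∀ k, r k ≤ d k) ∧
    ∃ A : (k : Fin K) → Matrix (Fin (d k)) (Fin (r k)) ℝ,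
      (∀ k, (A k).rank = r k) ∧
        ∃ (F : Fin T → Tensor r) (E : Fin T → Tensor d),
          ∀ t, Y t = multiMode A (F t) + E t

/-- Statement (ii): `Reshape(Y_t, 𝒜) = G_t ×₁ B₁ ⋯ ×_{K−ℓ} B_{K−ℓ}
×_{K−ℓ+1} (A_{a_ℓ} ⊗ ⋯ ⊗ A_{a₁}) + N_t` with full-column-rank loadings. -/
def FollowsReshapedTFM {K T : ℕ} (d : Fin K → ℕ) (Y : Fin T → Tensor d)
    (𝒜 : Finset (Fin K)) : Prop :=
  ∃ r : Fin K → ℕ, (∀ k, r k ≤ d k) ∧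
    ∃ B : (j : {j : Fin K // j ∉ 𝒜}) → Matrix (Fin (d j.1)) (Fin (r j.1)) ℝ,
      ∃ A : (a : {a : Fin K // a ∈ 𝒜}) → Matrix (Fin (d a.1)) (Fin (r a.1)) ℝ,
        (∀ j, (B j).rank = r j.1) ∧ (∀ a, (A a).rank = r a.1) ∧
          ∃ (G : Fin T → ((j : {j : Fin K // j ∉ 𝒜}) → Fin (r j.1)) →
                ((a : {a : Fin K // a ∈ 𝒜}) → Fin (r a.1)) → ℝ)
            (N : Fin T → ((j : {j : Fin K // j ∉ 𝒜}) → Fin (d j.1)) →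
                ((a : {a : Fin K // a ∈ 𝒜}) → Fin (d a.1)) → ℝ),
            ∀ t c m, Reshape (Y t) 𝒜 c m =
              (∑ xc : (j : {j : Fin K // j ∉ 𝒜}) → Fin (r j.1),
                ∑ xm : (a : {a : Fin K // a ∈ 𝒜}) → Fin (r a.1),
                  kronPi B c xc * kronPi A m xm * G t xc xm) + N t c m


/-- Splitting a full multi-index into its `𝒜`-part and complement part. -/
def splitEquiv {K : ℕ} (𝒜 : Finset (Fin K)) (r : Fin K → ℕ) :
    ((k : Fin K) → Fin (r k)) ≃
      (((j : {j : Fin K // j ∉ 𝒜}) → Fin (r j.1)) ×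
        ((a : {a : Fin K // a ∈ 𝒜}) → Fin (r a.1))) where
  toFun x := (fun j => x j.1, fun a => x a.1)
  invFun p := fun k => if h : k ∈ 𝒜 then p.2 ⟨k, h⟩ else p.1 ⟨k, h⟩
  left_inv x := by
    funext k
    by_cases h : k ∈ 𝒜 <;> simp [h]
  right_inv p := by
    refine Prod.ext ?_ ?_ <;> funext j
    · simp [j.2]
    · simp [j.2]

lemma reshape_multiMode {K : ℕ} {d r : Fin K → ℕ}
    (A : (k : Fin K) → Matrix (Fin (d k)) (Fin (r k)) ℝ) (F : Tensor r)
    (𝒜 : Finset (Fin K)) (c : (j : {j : Fin K // j ∉ 𝒜}) → Fin (d j.1))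
    (m : (a : {a : Fin K // a ∈ 𝒜}) → Fin (d a.1)) :
    Reshape (multiMode A F) 𝒜 c m =
      ∑ xc : (j : {j : Fin K // j ∉ 𝒜}) → Fin (r j.1),
        ∑ xm : (a : {a : Fin K // a ∈ 𝒜}) → Fin (r a.1),
          kronPi (fun j : {j : Fin K // j ∉ 𝒜} => A j.1) c xc *
            kronPi (fun a : {a : Fin K // a ∈ 𝒜} => A a.1) m xm *
              Reshape F 𝒜 xc xm := by
  show (∑ x : (k : Fin K) → Fin (r k),
      (∏ k, A k (if h : k ∈ 𝒜 then m ⟨k, h⟩ else c ⟨k, h⟩) (x k)) * F x) = _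
  rw [← Equiv.sum_comp (splitEquiv 𝒜 r).symm
    (fun x => (∏ k, A k (if h : k ∈ 𝒜 then m ⟨k, h⟩ else c ⟨k, h⟩) (x k)) * F x),
    Fintype.sum_prod_type]
  refine Finset.sum_congr rfl fun xc _ => Finset.sum_congr rfl fun xm _ => ?_
  set x : (k : Fin K) → Fin (r k) := (splitEquiv 𝒜 r).symm (xc, xm) with hxdef
  have hxc : (fun j : {j : Fin K // j ∉ 𝒜} => x j.1) = xc := by
    funext j; simp [hxdef, splitEquiv, j.2]
  have hxm : (fun a : {a : Fin K // a ∈ 𝒜} => x a.1) = xm := by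
    funext a; simp [hxdef, splitEquiv, a.2]
  have hsplit : (∏ k, A k (if h : k ∈ 𝒜 then m ⟨k, h⟩ else c ⟨k, h⟩) (x k)) =
      (∏ a : {a : Fin K // a ∈ 𝒜}, A a.1 (m a) (x a.1)) *
        (∏ j : {j : Fin K // j ∉ 𝒜}, A j.1 (c j) (x j.1)) := by
    rw [← Fintype.prod_subtype_mul_prod_subtype (· ∈ 𝒜)
      (fun k => A k (if h : k ∈ 𝒜 then m ⟨k, h⟩ else c ⟨k, h⟩) (x k))]
    congr 1
    · refine Finset.prod_congr (by congr!) fun a _ => ?_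
      simp [a.2]
    · refine Finset.prod_congr (by congr!) fun j _ => ?_
      simp [j.2]
  have hF : Reshape F 𝒜 xc xm = F x := rfl
  show (∏ k, A k (if h : k ∈ 𝒜 then m ⟨k, h⟩ else c ⟨k, h⟩) (x k)) * F x = _
  rw [hsplit, ← hF, ← hxc, ← hxm]
  unfold kronPi
  simp only [Matrix.of_apply]
  ring

lemma reshape_glue {K : ℕ} {d : Fin K → ℕ} (X : Tensor d) (𝒜 : Finset (Fin K))
    (i : (k : Fin K) → Fin (d k)) :
    Reshape X 𝒜 (fun j => i j.1) (fun a => i a.1) = X i := by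
  unfold Reshape
  congr 1
  funext k
  by_cases h : k ∈ 𝒜 <;> simp [h]

theorem tensor_reshape_theorem_I {K T : ℕ} (d : Fin K → ℕ) (Y : Fin T → Tensor d)
    (𝒜 : Finset (Fin K)) :
    (FollowsTFM d Y ↔ FollowsReshapedTFM d Y 𝒜) ∧
    -- Moreover, (i) implies (ii) with the explicit correspondence
    -- `G_t = Reshape(F_t, 𝒜)`, `N_t = Reshape(E_t, 𝒜)`, `B_j = A_{c_j}`:
    (∀ (r : Fin K → ℕ), (∀ k, r k ≤ d k) →
      ∀ (A : (k : Fin K) → Matrix (Fin (d k)) (Fin (r k)) ℝ), (∀ k, (A k).rank = r k) →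
        ∀ (F : Fin T → Tensor r) (E : Fin T → Tensor d),
          (∀ t, Y t = multiMode A (F t) + E t) →
            ∀ t c m, Reshape (Y t) 𝒜 c m =
              (∑ xc : (j : {j : Fin K // j ∉ 𝒜}) → Fin (r j.1),
                ∑ xm : (a : {a : Fin K // a ∈ 𝒜}) → Fin (r a.1),
                  kronPi (fun j : {j : Fin K // j ∉ 𝒜} => A j.1) c xc *
                    kronPi (fun a : {a : Fin K // a ∈ 𝒜} => A a.1) m xm *
                      Reshape (F t) 𝒜 xc xm) + Reshape (E t) 𝒜 c m) := by
  -- The explicit "moreover" part.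
  have moreover : ∀ (r : Fin K → ℕ), (∀ k, r k ≤ d k) →
      ∀ (A : (k : Fin K) → Matrix (Fin (d k)) (Fin (r k)) ℝ), (∀ k, (A k).rank = r k) →
        ∀ (F : Fin T → Tensor r) (E : Fin T → Tensor d),
          (∀ t, Y t = multiMode A (F t) + E t) →
            ∀ t c m, Reshape (Y t) 𝒜 c m =
              (∑ xc : (j : {j : Fin K // j ∉ 𝒜}) → Fin (r j.1),
                ∑ xm : (a : {a : Fin K // a ∈ 𝒜}) → Fin (r a.1),
                  kronPi (fun j : {j : Fin K // j ∉ 𝒜} => A j.1) c xc *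
                    kronPi (fun a : {a : Fin K // a ∈ 𝒜} => A a.1) m xm *
                      Reshape (F t) 𝒜 xc xm) + Reshape (E t) 𝒜 c m := by
    intro r hr A hA F E hY t c m
    have : Reshape (Y t) 𝒜 c m
        = Reshape (multiMode A (F t)) 𝒜 c m + Reshape (E t) 𝒜 c m := by
      rw [hY t]; rfl
    rw [this, reshape_multiMode]
  refine ⟨⟨fun hi => ?_, fun hii => ?_⟩, moreover⟩
  · obtain ⟨r, hr, A, hA, F, E, hY⟩ := hi
    exact ⟨r, hr, fun j => A j.1, fun a => A a.1, fun j => hA j.1, fun a => hA a.1,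
      fun t => Reshape (F t) 𝒜, fun t => Reshape (E t) 𝒜,
      moreover r hr A hA F E hY⟩
  · obtain ⟨r, hr, B, A, hB, hA, G, N, hY⟩ := hii
    refine ⟨r, hr, fun k => if h : k ∈ 𝒜 then A ⟨k, h⟩ else B ⟨k, h⟩, ?_,
      fun t x => G t (fun j => x j.1) (fun a => x a.1),
      fun t i => N t (fun j => i j.1) (fun a => i a.1), ?_⟩
    · intro k
      by_cases h : k ∈ 𝒜 <;> simp [h, hA, hB]
    · intro t
      funext i
      set A' : (k : Fin K) → Matrix (Fin (d k)) (Fin (r k)) ℝ :=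
        fun k => if h : k ∈ 𝒜 then A ⟨k, h⟩ else B ⟨k, h⟩ with hA'
      have hBeq : (fun j : {j : Fin K // j ∉ 𝒜} => A' j.1) = B := by
        funext j; simp [hA', j.2]
      have hAeq : (fun a : {a : Fin K // a ∈ 𝒜} => A' a.1) = A := by
        funext a; simp [hA', a.2]
      have h1 : Y t i = Reshape (Y t) 𝒜 (fun j => i j.1) (fun a => i a.1) :=
        (reshape_glue (Y t) 𝒜 i).symm
      have h2 := hY t (fun j => i j.1) (fun a => i a.1)
      have h3 : Reshape (multiMode A' (fun x => G t (fun j => x j.1) (fun a => x a.1))) 𝒜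
          (fun j => i j.1) (fun a => i a.1) =
          ∑ xc : (j : {j : Fin K // j ∉ 𝒜}) → Fin (r j.1),
            ∑ xm : (a : {a : Fin K // a ∈ 𝒜}) → Fin (r a.1),
              kronPi B (fun j => i j.1) xc * kronPi A (fun a => i a.1) xm * G t xc xm := by
        rw [reshape_multiMode, hBeq, hAeq]
        refine Finset.sum_congr rfl fun xc _ => Finset.sum_congr rfl fun xm _ => ?_
        congr 1
        have e1 : (fun j : {j : Fin K // j ∉ 𝒜} =>
            if h : (j : Fin K) ∈ 𝒜 then xm ⟨j, h⟩ else xc ⟨j, h⟩) = xc := by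
          funext j; simp [j.2]
        have e2 : (fun a : {a : Fin K // a ∈ 𝒜} =>
            if h : (a : Fin K) ∈ 𝒜 then xm ⟨a, h⟩ else xc ⟨a, h⟩) = xm := by
          funext a; simp [a.2]
        show G t _ _ = G t xc xm
        rw [e1, e2]
      show Y t i = multiMode A' _ i + _
      rw [h1, h2, ← h3, reshape_glue]
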